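/- For a fixed vote vector p with positive integer entries and any cut point c ∈ [0,1], the apportionment sequence S_c(p) = s_1, s_2, ... is periodic with period P = (p_1 + ... + p_n)/gcd(p_1, ..., p_n): s_{mP + k} = s_k for all k = 1, ..., P and all m ≥ 1, and P is the minimal period. -/

import Mathlib

open ENNReal

/-- Number of seats party `i` holds after the first `h` seats of sequence `s`. -/
def alloc {n : ℕ} (s : ℕ → Fin n) (i : Fin n) (h : ℕ) : ℕ :=
  ((Finset.range h).filter (fun t => s t = i)).card

/-- `s` is the apportionment sequence of the stationary divisor method with cut
point `c` for votes `p`: each seat goes to the party maximizing `pᵢ/(aᵢ+c)`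
(computed in `ℝ≥0∞`, so that `pᵢ/0 = ∞` encodes the Adams convention), with
ties broken in favor of the smaller index. -/
def IsStationarySeq {n : ℕ} (p : Fin n → ℕ) (c : NNReal) (s : ℕ → Fin n) : Prop :=
  ∀ h : ℕ, ∀ j : Fin n,
    (p j : ℝ≥0∞) / ((alloc s j h : ℝ≥0∞) + (c : ℝ≥0∞)) <
        (p (s h) : ℝ≥0∞) / ((alloc s (s h) h : ℝ≥0∞) + (c : ℝ≥0∞)) ∨
    ((p (s h) : ℝ≥0∞) / ((alloc s (s h) h : ℝ≥0∞) + (c : ℝ≥0∞)) =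
        (p j : ℝ≥0∞) / ((alloc s j h : ℝ≥0∞) + (c : ℝ≥0∞)) ∧ s h ≤ j)

/-!
Write `p = d • q` with `d = gcd p`, and rank seats by the price `(a + c) / pᵢ`, the reciprocal
of the divisor-method quotient; the next seat goes to the lexicographically least
(price, index). The price of the seat that brought party `i` to `a` seats never exceeds the
current price of any other party. Since `c ≤ 1`, a party below its quota `m qⱼ` is strictly
cheaper than any party at its quota, so after `m ∑ q` seats every party holds exactly `m qᵢ`.
Adding `m qᵢ` seats to every party raises all prices by the same `m / d`, so from that point
on the sequence repeats itself. Conversely, along a period `T` the allocations grow linearly,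
so `∑ q ∣ T qᵢ` for every `i`, and `gcd q = 1` gives `∑ q ∣ T`.
-/

open scoped NNReal

variable {n : ℕ}

lemma alloc_eq_count (s : ℕ → Fin n) (i : Fin n) (h : ℕ) :
    alloc s i h = Nat.count (fun t => s t = i) h :=
  (Nat.count_eq_card_filter_range _ h).symm

lemma alloc_succ (s : ℕ → Fin n) (i : Fin n) (h : ℕ) :
    alloc s i (h + 1) = alloc s i h + if s h = i then 1 else 0 := by
  simp only [alloc_eq_count, Nat.count_succ]

lemma alloc_mono (s : ℕ → Fin n) (i : Fin n) : Monotone (alloc s i) := by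
  intro a b hab
  simp only [alloc_eq_count]
  exact Nat.count_monotone _ hab

lemma sum_alloc (s : ℕ → Fin n) (h : ℕ) : ∑ i, alloc s i h = h :=
  ((Finset.card_eq_sum_card_fiberwise fun _ _ => Finset.mem_univ _).symm).trans
    (Finset.card_range h)

lemma alloc_add_of_forall_lt {s : ℕ → Fin n} {i : Fin n} {N t : ℕ}
    (hst : ∀ k < t, s (N + k) = s k) :
    alloc s i (N + t) = alloc s i N + alloc s i t := by
  rw [alloc_eq_count, alloc_eq_count, alloc_eq_count, Nat.count_add]
  simp only [Nat.count_eq_card_filter_range]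
  congr 2
  exact Finset.filter_congr fun k hk => by rw [hst k (Finset.mem_range.1 hk)]

lemma Function.Periodic.alloc_mul {s : ℕ → Fin n} {i : Fin n} {T : ℕ}
    (hT : Function.Periodic s T) (m : ℕ) :
    alloc s i (m * T) = m * alloc s i T := by
  induction m with
  | zero => simp [alloc]
  | succ m ih =>
    have hshift : ∀ k, s (m * T + k) = s k := fun k => add_comm k (m * T) ▸ hT.nat_mul m k
    rw [add_mul, one_mul, alloc_add_of_forall_lt fun k _ => hshift k, ih, add_mul, one_mul]

section Price

variable {p q : Fin n → ℕ} {c : ℝ≥0} {d : ℕ}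

noncomputable def seatPrice (p : Fin n → ℕ) (c : ℝ≥0) (i : Fin n) (k : ℕ) : ℝ := (k + c) / p i

def IsWinner (p : Fin n → ℕ) (c : ℝ≥0) (a : Fin n → ℕ) (w : Fin n) : Prop :=
  ∀ j, toLex (seatPrice p c w (a w), w) ≤ toLex (seatPrice p c j (a j), j)

lemma seatPrice_mono (i : Fin n) : Monotone (seatPrice p c i) := by
  intro a b hab
  unfold seatPrice
  gcongr

lemma seatPrice_mul_add {i : Fin n} (hp : p i = d * q i) (hpi : 0 < p i) (m k : ℕ) :
    seatPrice p c i (m * q i + k) = m / d + seatPrice p c i k := by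
  obtain ⟨hd, hq⟩ := CanonicallyOrderedAdd.mul_pos.1 (hp ▸ hpi)
  unfold seatPrice
  rw [hp]
  push_cast
  field_simp
  ring

lemma seatPrice_lt_seatPrice_mul (hpq : ∀ i, p i = d * q i) (hpos : ∀ i, 0 < p i) (hc : c ≤ 1)
    {j : Fin n} {m k : ℕ} (hk : k < m * q j) (i : Fin n) :
    seatPrice p c j k < seatPrice p c i (m * q i) := by
  have hdq : ∀ i, 0 < d ∧ 0 < q i := fun i => CanonicallyOrderedAdd.mul_pos.1 (hpq i ▸ hpos i)
  have hd : (0 : ℝ) < d := by exact_mod_cast (hdq i).1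
  have hqi : (1 : ℝ) ≤ q i := by exact_mod_cast (hdq i).2
  have hqj : (1 : ℝ) ≤ q j := by exact_mod_cast (hdq j).2
  have hk' : (k : ℝ) + 1 ≤ m * q j := by exact_mod_cast hk
  have hc' : (c : ℝ) ≤ 1 := hc
  have hc0 : (0 : ℝ) ≤ c := c.coe_nonneg
  -- `c qⱼ + (1 - c) qᵢ ≥ 1` is where `0 ≤ c ≤ 1` enters
  have key : ((k : ℝ) + c) * q i < (m * q i + c) * q j := by
    nlinarith [mul_nonneg hc0 (sub_nonneg.2 hqj), mul_nonneg (sub_nonneg.2 hc') (sub_nonneg.2 hqi)]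
  unfold seatPrice
  rw [hpq i, hpq j]
  push_cast
  rw [div_lt_div_iff₀ (by positivity) (by positivity)]
  linarith [mul_lt_mul_of_pos_left key hd]

lemma IsWinner.seatPrice_le {a : Fin n → ℕ} {w : Fin n} (hw : IsWinner p c a w) (j : Fin n) :
    seatPrice p c w (a w) ≤ seatPrice p c j (a j) :=
  Prod.Lex.monotone_fst _ _ (hw j)

lemma IsWinner.unique {a : Fin n → ℕ} {w w' : Fin n} (hw : IsWinner p c a w)
    (hw' : IsWinner p c a w') : w = w' :=
  (Prod.ext_iff.1 (toLex.injective (le_antisymm (hw w') (hw' w)))).2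

lemma isWinner_mul_add_iff (hpq : ∀ i, p i = d * q i) (hpos : ∀ i, 0 < p i)
    {a : Fin n → ℕ} {w : Fin n} (m : ℕ) :
    IsWinner p c (fun i => m * q i + a i) w ↔ IsWinner p c a w := by
  simp only [IsWinner, seatPrice_mul_add (hpq _) (hpos _), Prod.Lex.toLex_le_toLex,
    add_lt_add_iff_left, add_left_cancel_iff]

end Price

lemma natCast_div_eq_inv_ofReal_seatPrice {p : Fin n → ℕ} {i : Fin n} (hpi : 0 < p i) (c : ℝ≥0)
    (k : ℕ) : (p i : ℝ≥0∞) / (k + c) = (ENNReal.ofReal (seatPrice p c i k))⁻¹ := by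
  rw [seatPrice, ENNReal.ofReal_div_of_pos (by exact_mod_cast hpi),
    ENNReal.ofReal_add (by positivity) c.coe_nonneg, ENNReal.ofReal_natCast,
    ENNReal.ofReal_natCast, ENNReal.ofReal_coe_nnreal,
    ENNReal.inv_div (Or.inl (ENNReal.natCast_ne_top _)) (Or.inl (by exact_mod_cast hpi.ne'))]

namespace IsStationarySeq

variable {p q : Fin n → ℕ} {c : ℝ≥0} {s : ℕ → Fin n} {d : ℕ}

lemma isWinner (hpos : ∀ i, 0 < p i) (hs : IsStationarySeq p c s) (h : ℕ) :
    IsWinner p c (fun i => alloc s i h) (s h) := by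
  intro j
  have hnonneg : ∀ i k, 0 ≤ seatPrice p c i k := fun i k => by unfold seatPrice; positivity
  have hsj := hs h j
  simp only [natCast_div_eq_inv_ofReal_seatPrice (hpos _), ENNReal.inv_lt_inv, inv_inj,
    ENNReal.ofReal_lt_ofReal_iff_of_nonneg (hnonneg (s h) _),
    ENNReal.ofReal_eq_ofReal_iff (hnonneg (s h) _) (hnonneg j _)] at hsj
  exact Prod.Lex.toLex_le_toLex.2 hsj

lemma seatPrice_le_of_alloc_eq_succ (hpos : ∀ i, 0 < p i) (hs : IsStationarySeq p c s)
    {h k : ℕ} {i : Fin n} (hk : alloc s i h = k + 1) (j : Fin n) :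
    seatPrice p c i k ≤ seatPrice p c j (alloc s j h) := by
  induction h generalizing k with
  | zero => simp [alloc] at hk
  | succ h ih =>
    refine le_trans ?_ (seatPrice_mono j (alloc_mono s j h.le_succ))
    rw [alloc_succ] at hk
    by_cases hi : s h = i
    · rw [if_pos hi, Nat.add_right_cancel_iff] at hk
      subst hi hk
      exact (hs.isWinner hpos h).seatPrice_le j
    · simp only [if_neg hi, add_zero] at hk
      exact ih hk

theorem alloc_mul_sum (hpos : ∀ i, 0 < p i) (hc : c ≤ 1) (hpq : ∀ i, p i = d * q i)
    (hs : IsStationarySeq p c s) (m : ℕ) (i : Fin n) :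
    alloc s i (m * ∑ j, q j) = m * q i := by
  have hsum : ∑ i, alloc s i (m * ∑ j, q j) = ∑ i, m * q i := by
    rw [sum_alloc, Finset.mul_sum]
  have hle : ∀ i, alloc s i (m * ∑ j, q j) ≤ m * q i := by
    intro i
    by_contra! hover
    obtain ⟨j, hj⟩ : ∃ j, alloc s j (m * ∑ j, q j) < m * q j := by
      by_contra! hunder
      have := (Finset.sum_eq_sum_iff_of_le fun j _ => hunder j).1 hsum.symm i (Finset.mem_univ i)
      omega
    obtain ⟨k, hk⟩ : ∃ k, alloc s i (m * ∑ j, q j) = k + 1 := Nat.exists_eq_add_one.2 (by omega)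
    have := calc
      seatPrice p c j (alloc s j _) < seatPrice p c i (m * q i) :=
        seatPrice_lt_seatPrice_mul hpq hpos hc hj i
      _ ≤ seatPrice p c i k := seatPrice_mono i (by omega)
      _ ≤ seatPrice p c j (alloc s j _) := hs.seatPrice_le_of_alloc_eq_succ hpos hk j
    exact this.false
  exact (Finset.sum_eq_sum_iff_of_le fun i _ => hle i).1 hsum i (Finset.mem_univ i)

theorem periodic (hpos : ∀ i, 0 < p i) (hc : c ≤ 1) (hpq : ∀ i, p i = d * q i)
    (hs : IsStationarySeq p c s) : Function.Periodic s (∑ i, q i) := by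
  suffices ∀ t, s (∑ i, q i + t) = s t from fun t => add_comm t _ ▸ this t
  intro t
  induction t using Nat.strong_induction_on with
  | _ t ih =>
    have halloc : (fun i => alloc s i (∑ j, q j + t)) = fun i => 1 * q i + alloc s i t := by
      ext i
      rw [alloc_add_of_forall_lt ih, ← one_mul (∑ j, q j), hs.alloc_mul_sum hpos hc hpq]
    have hwin := (isWinner_mul_add_iff hpq hpos 1).2 (hs.isWinner hpos t)
    rw [← halloc] at hwin
    exact (hs.isWinner hpos _).unique hwin

theorem sum_dvd_of_periodic (hpos : ∀ i, 0 < p i) (hc : c ≤ 1) (hpq : ∀ i, p i = d * q i)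
    (hs : IsStationarySeq p c s) (hq : Finset.univ.gcd q = 1) {T : ℕ}
    (hT : Function.Periodic s T) : ∑ i, q i ∣ T := by
  have hdvd : ∀ i, ∑ j, q j ∣ T * q i := fun i =>
    ⟨alloc s i T, by rw [← hs.alloc_mul_sum hpos hc hpq T i, mul_comm, hT.alloc_mul]⟩
  simpa [Finset.gcd_mul_left, hq] using Finset.dvd_gcd (s := Finset.univ) fun i _ => hdvd i

end IsStationarySeq

theorem stationary_seq_periodic_general {n : ℕ} (p : Fin n → ℕ)
    (hpos : ∀ i, 0 < p i)
    (c : NNReal) (hc : c ≤ 1) (s : ℕ → Fin n) (hs : IsStationarySeq p c s)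
    (P : ℕ) (hP : P = (∑ i, p i) / Finset.univ.gcd p) :
    (∀ m : ℕ, 1 ≤ m → ∀ k : ℕ, 1 ≤ k → k ≤ P → s (m * P + k - 1) = s (k - 1)) ∧
    (∀ Q : ℕ, 0 < Q → Q < P → ¬ Function.Periodic s Q) := by
  set d := Finset.univ.gcd p
  have hd : ∀ i, d ∣ p i := fun i => Finset.gcd_dvd (Finset.mem_univ i)
  have hpq : ∀ i, p i = d * (p i / d) := fun i => (Nat.mul_div_cancel' (hd i)).symm
  have hPq : P = ∑ i, p i / d := hP.trans (Nat.sum_div fun i _ => hd i)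
  have hper : Function.Periodic s P := hPq ▸ hs.periodic hpos hc hpq
  refine ⟨fun m _ k _ _ => ?_, fun Q hQ hQP hQper => ?_⟩
  · rw [show m * P + k - 1 = k - 1 + m * P by omega]
    exact hper.nat_mul m (k - 1)
  · have hq : Finset.univ.gcd (fun i => p i / d) = 1 :=
      Finset.gcd_div_eq_one (Finset.mem_univ (s 0)) (hpos _).ne'
    have hPQ : P ∣ Q := hPq ▸ hs.sum_dvd_of_periodic hpos hc hpq hq hQper
    exact absurd (Nat.le_of_dvd hQ hPQ) (by omega)

/-- For integer votes, the apportionment sequence of a stationary divisor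
method with cut point `c ∈ [0,1]` is periodic with minimal period
`P = (p_1 + ⋯ + p_n)/gcd(p_1, …, p_n)`:  `s_{mP+k} = s_k` for all
`1 ≤ k ≤ P` and `m ≥ 1`, and no positive `Q < P` is a period. -/
theorem stationary_seq_periodic {n : ℕ} (hn : 0 < n) (p : Fin n → ℕ)
    (hpos : ∀ i, 0 < p i) (hmono : ∀ i j : Fin n, i ≤ j → p j ≤ p i)
    (c : NNReal) (hc : c ≤ 1) (s : ℕ → Fin n) (hs : IsStationarySeq p c s)
    (P : ℕ) (hP : P = (∑ i, p i) / Finset.univ.gcd p) :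
    (∀ m : ℕ, 1 ≤ m → ∀ k : ℕ, 1 ≤ k → k ≤ P → s (m * P + k - 1) = s (k - 1)) ∧
    (∀ Q : ℕ, 0 < Q → Q < P → ¬ Function.Periodic s Q) :=
  stationary_seq_periodic_general p hpos c hc s hs P hP
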